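/- arXiv:1212.3776 — 3 statements merged into one kernel-verified Lean document; each statement's English description precedes it below -/
import Mathlib

section
/- Every weakly convex closed preordered k_ω-space is a convex normally preordered space. -/
/-!
Convexity and normality are both instances of one separation property. Let `F ⊆ E × E` be closed
and upward closed for the order `≤ × ≥`. If a closed lower set `A` and a closed upper set `B`
satisfy `(A × B) ∩ F = ∅`, and the `F`-image of `A` and `F`-preimage of `B` are closed, then they
have an open lower neighbourhood `U` and an open upper neighbourhood `V` with `(U × V) ∩ F = ∅`.
Normality is the case `F = {(p, q) | q ≤ p}`; convexity at `x` is the case `A = ↓x`, `B = ↑x`,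
`F = {(p, q) | q ≤ p} \ C × C` for a convex open neighbourhood `C` of `x`, whose convexity makes
`F` upward closed.

Since the upper closure of a compact set is closed, inside a compact set `K` an open neighbourhood
of a lower set can be shrunk to a lower set relatively open in `K`; combined with the tube lemma in
`E` and in `E × Eᵒᵈ` this gives the separation relative to `K`. Doing this on `K₀ ⊆ K₁ ⊆ ⋯`, each
stage containing the closure of the previous one, yields increasing relatively open lower and
upper sets whose unions are open because `E` carries the weak topology of the `Kₙ`.
-/

open Topology

/-- The increasing hull `i(S) = {y | ∃ x ∈ S, x ≤ y}`. -/
def incHull {E : Type*} [Preorder E] (S : Set E) : Set E := {y | ∃ x ∈ S, x ≤ y}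

/-- The decreasing hull `d(S) = {y | ∃ x ∈ S, y ≤ x}`. -/
def decHull {E : Type*} [Preorder E] (S : Set E) : Set E := {y | ∃ x ∈ S, y ≤ x}

/-- A subset `C` is (order) convex if `C = d(C) ∩ i(C)`. -/
def IsOrdConvex {E : Type*} [Preorder E] (C : Set E) : Prop :=
  decHull C ∩ incHull C = C

/-- A `k_ω`-space: there is an increasing sequence of compact sets covering the
space such that a set is open iff its trace on each compact set is open in the
subspace topology. -/
def IsKOmegaSpace (E : Type*) [TopologicalSpace E] : Prop :=
  ∃ K : ℕ → Set E, (∀ n, IsCompact (K n)) ∧ (∀ n, K n ⊆ K (n + 1)) ∧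
    (⋃ n, K n) = Set.univ ∧
    ∀ O : Set E, IsOpen O ↔ ∀ n, IsOpen {y : K n | (y : E) ∈ O}

open Set Set.Notation

section RelativeSets

variable {X : Type*} [TopologicalSpace X] [Preorder X]

def IsRelOpenLowerSet (K U : Set X) : Prop :=
  U ⊆ K ∧ IsOpen (K ↓∩ U) ∧ IsLowerSet (K ↓∩ U)

def IsRelOpenUpperSet (K U : Set X) : Prop :=
  U ⊆ K ∧ IsOpen (K ↓∩ U) ∧ IsUpperSet (K ↓∩ U)

lemma IsRelOpenLowerSet.inter {K U V : Set X} (hU : IsRelOpenLowerSet K U)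
    (hV : IsRelOpenLowerSet K V) : IsRelOpenLowerSet K (U ∩ V) :=
  ⟨inter_subset_left.trans hU.1, hU.2.1.inter hV.2.1, hU.2.2.inter hV.2.2⟩

lemma IsRelOpenUpperSet.inter {K U V : Set X} (hU : IsRelOpenUpperSet K U)
    (hV : IsRelOpenUpperSet K V) : IsRelOpenUpperSet K (U ∩ V) :=
  ⟨inter_subset_left.trans hU.1, hU.2.1.inter hV.2.1, hU.2.2.inter hV.2.2⟩

end RelativeSets

section ClosedPreorder

variable {X : Type*} [TopologicalSpace X] [Preorder X] [OrderClosedTopology X]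

lemma exists_isOpen_prod_subset_not_le {S T : Set X} (hS : IsCompact S) (hT : IsCompact T)
    (h : ∀ s ∈ S, ∀ t ∈ T, ¬ t ≤ s) :
    ∃ U V, IsOpen U ∧ IsOpen V ∧ S ⊆ U ∧ T ⊆ V ∧ U ×ˢ V ⊆ {p | ¬ p.2 ≤ p.1} :=
  generalized_tube_lemma hS hT (isClosed_le continuous_snd continuous_fst).isOpen_compl
    fun p hp => h p.1 hp.1 p.2 hp.2

lemma separatedNhds_of_forall_not_le {S T : Set X} (hS : IsCompact S) (hT : IsCompact T)
    (h : ∀ s ∈ S, ∀ t ∈ T, ¬ t ≤ s) : SeparatedNhds S T :=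
  let ⟨U, V, hU, hV, hSU, hTV, hUV⟩ := exists_isOpen_prod_subset_not_le hS hT h
  ⟨U, V, hU, hV, hSU, hTV, disjoint_left.2 fun _ hxU hxV => hUV (mk_mem_prod hxU hxV) le_rfl⟩

lemma IsCompact.isClosed_upperClosure {s : Set X} (hs : IsCompact s) :
    IsClosed (upperClosure s : Set X) := by
  refine isOpen_compl_iff.1 (isOpen_iff_forall_mem_open.2 fun y hy => ?_)
  obtain ⟨U, V, hU, -, hyU, hsV, hUV⟩ := exists_isOpen_prod_subset_not_le isCompact_singleton hs
    (by rintro _ rfl a ha hay; exact hy ⟨a, ha, hay⟩)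
  exact ⟨U, fun z hz ⟨a, ha, haz⟩ => hUV (mk_mem_prod hz (hsV ha)) haz, hU, hyU rfl⟩

lemma IsCompact.isClosed_lowerClosure {s : Set X} (hs : IsCompact s) :
    IsClosed (lowerClosure s : Set X) :=
  hs.isClosed_upperClosure (X := Xᵒᵈ)

lemma exists_isRelOpenLowerSet_subset {K L O : Set X} (hK : IsCompact K) (hL : IsLowerSet L)
    (hO : IsOpen O) (hLO : L ∩ K ⊆ O) :
    ∃ U, IsRelOpenLowerSet K U ∧ L ∩ K ⊆ U ∧ U ⊆ O := by
  set W : Set X := ↑(upperClosure (K \ O))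
  have hW : IsClosed W := (hK.diff hO).isClosed_upperClosure
  refine ⟨K \ W, ⟨sdiff_subset, ?_, ?_⟩, ?_, ?_⟩
  · have : K ↓∩ (K \ W) = K ↓∩ Wᶜ := by ext; simp
    exact this ▸ hW.isOpen_compl.preimage continuous_subtype_val
  · rintro ⟨a, ha⟩ ⟨b, hb⟩ hba ⟨-, haW⟩
    exact ⟨hb, fun ⟨w, hw, hwb⟩ => haW ⟨w, hw, hwb.trans hba⟩⟩
  · rintro x ⟨hxL, hxK⟩
    exact ⟨hxK, fun ⟨w, ⟨hwK, hwO⟩, hwx⟩ => hwO (hLO ⟨hL hwx hxL, hwK⟩)⟩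
  · rintro x ⟨hxK, hxW⟩
    by_contra hxO
    exact hxW ⟨x, ⟨hxK, hxO⟩, le_rfl⟩

lemma exists_isRelOpenUpperSet_subset {K M O : Set X} (hK : IsCompact K) (hM : IsUpperSet M)
    (hO : IsOpen O) (hMO : M ∩ K ⊆ O) :
    ∃ V, IsRelOpenUpperSet K V ∧ M ∩ K ⊆ V ∧ V ⊆ O :=
  exists_isRelOpenLowerSet_subset (X := Xᵒᵈ) hK hM hO hMO

end ClosedPreorder

section PairOrder

variable {X : Type*} [Preorder X] {F : Set (X × X)}

lemma isUpperSet_prod_orderDual_iff : IsUpperSet (α := X × Xᵒᵈ) F ↔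
    ∀ ⦃p q p' q' : X⦄, (p, q) ∈ F → p ≤ p' → q' ≤ q → (p', q') ∈ F :=
  ⟨fun h _ _ _ _ hpq hp hq => h (Prod.mk_le_mk.2 ⟨hp, hq⟩) hpq,
    fun h ⟨_, _⟩ ⟨_, _⟩ ⟨hp, hq⟩ hpq => h hpq hp hq⟩

lemma disjoint_lowerClosure_prod_upperClosure (hFu : IsUpperSet (α := X × Xᵒᵈ) F)
    {s t : Set X} (h : Disjoint (s ×ˢ t) F) :
    Disjoint ((lowerClosure s : Set X) ×ˢ (upperClosure t : Set X)) F :=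
  disjoint_left.2 fun _ ⟨⟨_, ha, hpa⟩, ⟨_, hb, hbq⟩⟩ hpq =>
    disjoint_left.1 h (mk_mem_prod ha hb) (isUpperSet_prod_orderDual_iff.1 hFu hpq hpa hbq)

lemma isLowerSet_image_of_isUpperSet (hFu : IsUpperSet (α := X × Xᵒᵈ) F) (s : Set X) :
    IsLowerSet (SetRel.image F s) :=
  fun _ _ hqq' ⟨p, hp, hpq⟩ => ⟨p, hp, isUpperSet_prod_orderDual_iff.1 hFu hpq le_rfl hqq'⟩

lemma isUpperSet_preimage_of_isUpperSet (hFu : IsUpperSet (α := X × Xᵒᵈ) F) (t : Set X) :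
    IsUpperSet (SetRel.preimage F t) :=
  fun _ _ hpp' ⟨q, hq, hpq⟩ => ⟨q, hq, isUpperSet_prod_orderDual_iff.1 hFu hpq hpp' le_rfl⟩

lemma image_Iic_eq_preimage_of_isUpperSet (hFu : IsUpperSet (α := X × Xᵒᵈ) F) (x : X) :
    SetRel.image F (Iic x) = (x, ·) ⁻¹' F :=
  ext fun _ => ⟨fun ⟨_, hpx, hpq⟩ => isUpperSet_prod_orderDual_iff.1 hFu hpq hpx le_rfl,
    fun h => ⟨x, le_rfl, h⟩⟩

lemma preimage_Ici_eq_preimage_of_isUpperSet (hFu : IsUpperSet (α := X × Xᵒᵈ) F) (x : X) :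
    SetRel.preimage F (Ici x) = (·, x) ⁻¹' F :=
  ext fun _ => ⟨fun ⟨_, hxq, hpq⟩ => isUpperSet_prod_orderDual_iff.1 hFu hpq le_rfl hxq,
    fun h => ⟨x, le_rfl, h⟩⟩

end PairOrder

section Separation

variable {X : Type*} [TopologicalSpace X] [Preorder X] [OrderClosedTopology X]

lemma exists_isRelOpenLowerSet_disjoint_closure {K L Y : Set X} (hK : IsCompact K)
    (hL : IsClosed L) (hLl : IsLowerSet L) (hY : IsClosed Y) (hYu : IsUpperSet Y)
    (hLY : Disjoint L Y) :
    ∃ U, IsRelOpenLowerSet K U ∧ L ∩ K ⊆ U ∧ Disjoint (closure U) (Y ∩ K) := by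
  obtain ⟨O, O', hO, hO', hLO, hYO', hOO'⟩ :=
    separatedNhds_of_forall_not_le (hK.inter_left hL) (hK.inter_left hY)
      fun _ hs _ ht hts => disjoint_left.1 hLY hs.1 (hYu hts ht.1)
  obtain ⟨U, hU, hLU, hUO⟩ := exists_isRelOpenLowerSet_subset hK hLl hO hLO
  exact ⟨U, hU, hLU, (hOO'.closure_left hO').mono (closure_mono hUO) hYO'⟩

lemma exists_isRelOpenUpperSet_disjoint_closure {K M Y : Set X} (hK : IsCompact K)
    (hM : IsClosed M) (hMu : IsUpperSet M) (hY : IsClosed Y) (hYl : IsLowerSet Y)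
    (hMY : Disjoint M Y) :
    ∃ V, IsRelOpenUpperSet K V ∧ M ∩ K ⊆ V ∧ Disjoint (closure V) (Y ∩ K) :=
  exists_isRelOpenLowerSet_disjoint_closure (X := Xᵒᵈ) hK hM hMu hY hYl hMY

lemma exists_isRelOpenLowerSet_isRelOpenUpperSet_disjoint_closure_prod {K L M : Set X}
    {F : Set (X × X)} (hK : IsCompact K) (hL : IsClosed L) (hLl : IsLowerSet L)
    (hM : IsClosed M) (hMu : IsUpperSet M) (hF : IsClosed F)
    (hFu : IsUpperSet (α := X × Xᵒᵈ) F)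
    (hLM : Disjoint (L ×ˢ M) F) :
    ∃ U V, IsRelOpenLowerSet K U ∧ IsRelOpenUpperSet K V ∧ L ∩ K ⊆ U ∧ M ∩ K ⊆ V ∧
      Disjoint (closure U ×ˢ closure V) (F ∩ K ×ˢ K) := by
  -- in `X × Xᵒᵈ`, `F` is an upper set and `L ×ˢ M` a lower set
  obtain ⟨O, O', hO, hO', hLMO, hFO', hOO'⟩ := separatedNhds_of_forall_not_le (X := X × Xᵒᵈ)
    (by exact (hK.inter_left hL).prod (hK.inter_left hM)) (by exact (hK.prod hK).inter_left hF)
    (by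
      rintro ⟨p, q⟩ ⟨hp, hq⟩ ⟨p', q'⟩ ⟨hpq', -⟩ hle
      exact disjoint_left.1 hLM ⟨hp.1, hq.1⟩ (hFu hle hpq'))
  obtain ⟨U₀, V₀, hU₀, hV₀, hLU₀, hMV₀, hUV₀⟩ :=
    generalized_tube_lemma (hK.inter_left hL) (hK.inter_left hM) hO hLMO
  obtain ⟨U, hU, hLU, hUU₀⟩ := exists_isRelOpenLowerSet_subset hK hLl hU₀ hLU₀
  obtain ⟨V, hV, hMV, hVV₀⟩ := exists_isRelOpenUpperSet_subset hK hMu hV₀ hMV₀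
  refine ⟨U, V, hU, hV, hLU, hMV, ?_⟩
  rw [← closure_prod_eq]
  exact (hOO'.closure_left hO').mono (closure_mono ((prod_mono hUU₀ hVV₀).trans hUV₀)) hFO'

end Separation

section Extension

variable {X : Type*} [TopologicalSpace X] [Preorder X] [OrderClosedTopology X]
  {F : Set (X × X)} {A B : Set X}

lemma exists_isRelOpenLowerSet_isRelOpenUpperSet_of_disjoint_union_prod (hF : IsClosed F)
    (hFu : IsUpperSet (α := X × Xᵒᵈ) F) (hA : IsClosed A) (hAl : IsLowerSet A) (hB : IsClosed B)
    (hBu : IsUpperSet B) (hFA : IsClosed (SetRel.image F A)) (hFB : IsClosed (SetRel.preimage F B))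
    {K P Q : Set X} (hK : IsCompact K) (hP : IsCompact P) (hQ : IsCompact Q)
    (hPQ : Disjoint ((A ∪ P) ×ˢ (B ∪ Q)) F) :
    ∃ U V, IsRelOpenLowerSet K U ∧ IsRelOpenUpperSet K V ∧ (A ∪ P) ∩ K ⊆ U ∧
      (B ∪ Q) ∩ K ⊆ V ∧ Disjoint ((A ∪ closure U ∩ K) ×ˢ (B ∪ closure V ∩ K)) F := by
  have hLM := disjoint_lowerClosure_prod_upperClosure hFu hPQ
  rw [lowerClosure_union, upperClosure_union, LowerSet.coe_sup, UpperSet.coe_inf,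
    hAl.lowerClosure, hBu.upperClosure] at hLM
  set L := A ∪ (lowerClosure P : Set X)
  set M := B ∪ (upperClosure Q : Set X)
  have hL : IsClosed L := hA.union hP.isClosed_lowerClosure
  have hM : IsClosed M := hB.union hQ.isClosed_upperClosure
  have hLl : IsLowerSet L := hAl.union (lowerClosure P).lower
  have hMu : IsUpperSet M := hBu.union (upperClosure Q).upper
  obtain ⟨U₁, V₁, hU₁, hV₁, hLU₁, hMV₁, hUV₁⟩ :=
    exists_isRelOpenLowerSet_isRelOpenUpperSet_disjoint_closure_prod hK hL hLl hM hMu hF hFu hLM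
  obtain ⟨U₂, hU₂, hLU₂, hU₂B⟩ := exists_isRelOpenLowerSet_disjoint_closure hK hL hLl hFB
    (isUpperSet_preimage_of_isUpperSet hFu B)
    (disjoint_left.2 fun _ hp ⟨_, hb, hpb⟩ => disjoint_left.1 hLM ⟨hp, Or.inl hb⟩ hpb)
  obtain ⟨V₂, hV₂, hMV₂, hV₂A⟩ := exists_isRelOpenUpperSet_disjoint_closure hK hM hMu hFA
    (isLowerSet_image_of_isUpperSet hFu A)
    (disjoint_left.2 fun _ hq ⟨_, ha, haq⟩ => disjoint_left.1 hLM ⟨Or.inl ha, hq⟩ haq)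
  have hPL : (A ∪ P) ∩ K ⊆ L ∩ K :=
    inter_subset_inter_left _ (union_subset_union_right _ subset_lowerClosure)
  have hQM : (B ∪ Q) ∩ K ⊆ M ∩ K :=
    inter_subset_inter_left _ (union_subset_union_right _ subset_upperClosure)
  refine ⟨U₁ ∩ U₂, V₁ ∩ V₂, hU₁.inter hU₂, hV₁.inter hV₂, hPL.trans (subset_inter hLU₁ hLU₂),
    hQM.trans (subset_inter hMV₁ hMV₂), disjoint_left.2 ?_⟩
  rintro ⟨p, q⟩ ⟨hp | ⟨hpU, hpK⟩, hq | ⟨hqV, hqK⟩⟩ hpq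
  · exact disjoint_left.1 hLM ⟨Or.inl hp, Or.inl hq⟩ hpq
  · exact disjoint_left.1 hV₂A (closure_mono inter_subset_right hqV) ⟨⟨p, hp, hpq⟩, hqK⟩
  · exact disjoint_left.1 hU₂B (closure_mono inter_subset_right hpU) ⟨⟨q, hq, hpq⟩, hpK⟩
  · exact disjoint_left.1 hUV₁
      ⟨closure_mono inter_subset_left hpU, closure_mono inter_subset_left hqV⟩ ⟨hpq, hpK, hqK⟩

end Extension

lemma exists_seq_of_exists_succ {α : Type*} (P : ℕ → α → Prop) (R : α → α → Prop)
    (h₀ : ∃ a, P 0 a) (h : ∀ n a, P n a → ∃ b, P (n + 1) b ∧ R a b) :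
    ∃ f : ℕ → α, (∀ n, P n (f n)) ∧ ∀ n, R (f n) (f (n + 1)) := by
  choose next hnext hR using h
  let f : ∀ n, {a // P n a} := fun n =>
    Nat.rec ⟨h₀.choose, h₀.choose_spec⟩ (fun n a => ⟨next n a.1 a.2, hnext n a.1 a.2⟩) n
  exact ⟨fun n => (f n).1, fun n => (f n).2, fun n => hR n (f n).1 (f n).2⟩

section Exhaustion

variable {X : Type*} {K U : ℕ → Set X}

lemma isOpen_iUnion_of_isOpen_preimage_val [TopologicalSpace X] (hK : Monotone K)
    (hKO : ∀ O : Set X, (∀ n, IsOpen (K n ↓∩ O)) → IsOpen O) (hU : Monotone U)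
    (hUo : ∀ n, IsOpen (K n ↓∩ U n)) : IsOpen (⋃ n, U n) := by
  refine hKO _ fun i => ?_
  rw [← hU.iUnion_nat_add i, preimage_iUnion]
  exact isOpen_iUnion fun n =>
    (hUo (n + i)).preimage (continuous_inclusion (hK (Nat.le_add_left i n)))

lemma isLowerSet_iUnion_of_isLowerSet_preimage_val [Preorder X] (hK : Monotone K)
    (hKX : ⋃ n, K n = univ) (hU : Monotone U) (hUK : ∀ n, U n ⊆ K n)
    (hUl : ∀ n, IsLowerSet (K n ↓∩ U n)) :
    IsLowerSet (⋃ n, U n) := by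
  intro a b hba ha
  obtain ⟨n, ha⟩ := mem_iUnion.1 ha
  obtain ⟨m, hb⟩ := mem_iUnion.1 (hKX ▸ mem_univ b)
  exact mem_iUnion.2 ⟨max n m, @hUl (max n m) ⟨a, hK (le_max_left n m) (hUK n ha)⟩
    ⟨b, hK (le_max_right n m) hb⟩ hba (hU (le_max_left n m) ha)⟩

lemma isUpperSet_iUnion_of_isUpperSet_preimage_val [Preorder X] (hK : Monotone K)
    (hKX : ⋃ n, K n = univ) (hU : Monotone U) (hUK : ∀ n, U n ⊆ K n)
    (hUu : ∀ n, IsUpperSet (K n ↓∩ U n)) :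
    IsUpperSet (⋃ n, U n) :=
  isLowerSet_iUnion_of_isLowerSet_preimage_val (X := Xᵒᵈ) hK hKX hU hUK hUu

end Exhaustion

section KOmega

variable {X : Type*} [TopologicalSpace X] [Preorder X] [OrderClosedTopology X]
  {F : Set (X × X)} {A B : Set X}

lemma exists_seq_isRelOpenLowerSet_isRelOpenUpperSet (hF : IsClosed F)
    (hFu : IsUpperSet (α := X × Xᵒᵈ) F) (hA : IsClosed A) (hAl : IsLowerSet A) (hB : IsClosed B)
    (hBu : IsUpperSet B) (hFA : IsClosed (SetRel.image F A)) (hFB : IsClosed (SetRel.preimage F B))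
    (hAB : Disjoint (A ×ˢ B) F) {K : ℕ → Set X} (hKc : ∀ n, IsCompact (K n))
    (hK : ∀ n, K n ⊆ K (n + 1)) :
    ∃ U V : ℕ → Set X, Monotone U ∧ Monotone V ∧ ∀ n, IsRelOpenLowerSet (K n) (U n) ∧
      IsRelOpenUpperSet (K n) (V n) ∧ A ∩ K n ⊆ U n ∧ B ∩ K n ⊆ V n ∧
      Disjoint ((A ∪ closure (U n) ∩ K n) ×ˢ (B ∪ closure (V n) ∩ K n)) F := by
  have extend := @exists_isRelOpenLowerSet_isRelOpenUpperSet_of_disjoint_union_prod _ _ _ _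
    F A B hF hFu hA hAl hB hBu hFA hFB
  -- closures are passed on to the next stage because, unlike the stages themselves, they meet
  -- `K n` in a compact set
  let Inv : ℕ → Set X × Set X → Prop := fun n W =>
    IsRelOpenLowerSet (K n) W.1 ∧ IsRelOpenUpperSet (K n) W.2 ∧ A ∩ K n ⊆ W.1 ∧ B ∩ K n ⊆ W.2 ∧
      Disjoint ((A ∪ closure W.1 ∩ K n) ×ˢ (B ∪ closure W.2 ∩ K n)) F
  have base : ∃ W, Inv 0 W := by
    obtain ⟨U, V, hU, hV, hAU, hBV, hUV⟩ :=
      extend (hKc 0) isCompact_empty isCompact_empty (by simpa using hAB)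
    exact ⟨(U, V), hU, hV, by simpa using hAU, by simpa using hBV, hUV⟩
  have step : ∀ n W, Inv n W → ∃ W', Inv (n + 1) W' ∧ W.1 ⊆ W'.1 ∧ W.2 ⊆ W'.2 := by
    rintro n ⟨U, V⟩ ⟨hU, hV, -, -, hUV⟩
    obtain ⟨U', V', hU', hV', hAU', hBV', hUV'⟩ := extend (hKc (n + 1))
      ((hKc n).inter_left isClosed_closure) ((hKc n).inter_left isClosed_closure) hUV
    refine ⟨(U', V'), ⟨hU', hV', fun a ha => hAU' ⟨Or.inl ha.1, ha.2⟩,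
      fun b hb => hBV' ⟨Or.inl hb.1, hb.2⟩, hUV'⟩, fun u hu => hAU' ?_, fun v hv => hBV' ?_⟩
    · exact ⟨Or.inr ⟨subset_closure hu, hU.1 hu⟩, hK n (hU.1 hu)⟩
    · exact ⟨Or.inr ⟨subset_closure hv, hV.1 hv⟩, hK n (hV.1 hv)⟩
  obtain ⟨W, hW, hWW⟩ := exists_seq_of_exists_succ Inv _ base step
  exact ⟨fun n => (W n).1, fun n => (W n).2, monotone_nat_of_le_succ fun n => (hWW n).1,
    monotone_nat_of_le_succ fun n => (hWW n).2, hW⟩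

theorem IsKOmegaSpace.exists_open_lower_upper_disjoint_prod (hX : IsKOmegaSpace X)
    (hF : IsClosed F) (hFu : IsUpperSet (α := X × Xᵒᵈ) F) (hA : IsClosed A) (hAl : IsLowerSet A)
    (hB : IsClosed B) (hBu : IsUpperSet B) (hFA : IsClosed (SetRel.image F A))
    (hFB : IsClosed (SetRel.preimage F B)) (hAB : Disjoint (A ×ˢ B) F) :
    ∃ U V, IsOpen U ∧ IsLowerSet U ∧ IsOpen V ∧ IsUpperSet V ∧ A ⊆ U ∧ B ⊆ V ∧
      Disjoint (U ×ˢ V) F := by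
  obtain ⟨K, hKc, hK, hKX, hKO⟩ := hX
  have hKm : Monotone K := monotone_nat_of_le_succ hK
  obtain ⟨U, V, hU, hV, hUV⟩ := exists_seq_isRelOpenLowerSet_isRelOpenUpperSet hF hFu hA hAl hB
    hBu hFA hFB hAB hKc hK
  have hmem : ∀ x, ∃ n, x ∈ K n := fun x => mem_iUnion.1 (hKX ▸ mem_univ x)
  refine ⟨⋃ n, U n, ⋃ n, V n,
    isOpen_iUnion_of_isOpen_preimage_val hKm (fun O => (hKO O).2) hU fun n => (hUV n).1.2.1,
    isLowerSet_iUnion_of_isLowerSet_preimage_val hKm hKX hU (fun n => (hUV n).1.1)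
      fun n => (hUV n).1.2.2,
    isOpen_iUnion_of_isOpen_preimage_val hKm (fun O => (hKO O).2) hV fun n => (hUV n).2.1.2.1,
    isUpperSet_iUnion_of_isUpperSet_preimage_val hKm hKX hV (fun n => (hUV n).2.1.1)
      fun n => (hUV n).2.1.2.2,
    fun a ha => ?_, fun b hb => ?_, disjoint_left.2 ?_⟩
  · obtain ⟨n, hn⟩ := hmem a
    exact mem_iUnion.2 ⟨n, (hUV n).2.2.1 ⟨ha, hn⟩⟩
  · obtain ⟨n, hn⟩ := hmem b
    exact mem_iUnion.2 ⟨n, (hUV n).2.2.2.1 ⟨hb, hn⟩⟩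
  · rintro ⟨p, q⟩ ⟨hp, hq⟩
    obtain ⟨n, hp⟩ := mem_iUnion.1 hp
    obtain ⟨m, hq⟩ := mem_iUnion.1 hq
    replace hp := hU (le_max_left n m) hp
    replace hq := hV (le_max_right n m) hq
    exact disjoint_left.1 (hUV (max n m)).2.2.2.2
      ⟨Or.inr ⟨subset_closure hp, (hUV _).1.1 hp⟩, Or.inr ⟨subset_closure hq, (hUV _).2.1.1 hq⟩⟩

end KOmega

section Corollaries

variable {X : Type*} [TopologicalSpace X] [Preorder X] [OrderClosedTopology X]

theorem IsKOmegaSpace.exists_open_lower_upper_inter_subset (hX : IsKOmegaSpace X) {C : Set X}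
    (hC : IsOpen C) (hCc : C.OrdConnected) {x : X} (hx : x ∈ C) :
    ∃ U V, IsOpen U ∧ IsLowerSet U ∧ IsOpen V ∧ IsUpperSet V ∧ x ∈ U ∧ x ∈ V ∧ U ∩ V ⊆ C := by
  set F : Set (X × X) := {p | p.2 ≤ p.1} \ C ×ˢ C
  have hF : IsClosed F := (isClosed_le continuous_snd continuous_fst).sdiff (hC.prod hC)
  have hFu : IsUpperSet (α := X × Xᵒᵈ) F :=
    isUpperSet_prod_orderDual_iff.2 fun p q p' q' ⟨hqp, hpq⟩ hpp' hq'q =>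
      ⟨hq'q.trans (hqp.trans hpp'), fun ⟨hp', hq'⟩ =>
        hpq ⟨hCc.out hq' hp' ⟨hq'q.trans hqp, hpp'⟩, hCc.out hq' hp' ⟨hq'q, hqp.trans hpp'⟩⟩⟩
  obtain ⟨U, V, hU, hUl, hV, hVu, hxU, hxV, hUV⟩ := hX.exists_open_lower_upper_disjoint_prod hF
    hFu isClosed_Iic (isLowerSet_Iic x) isClosed_Ici (isUpperSet_Ici x)
    (image_Iic_eq_preimage_of_isUpperSet hFu x ▸ hF.preimage (Continuous.prodMk_right x))
    (preimage_Ici_eq_preimage_of_isUpperSet hFu x ▸ hF.preimage (Continuous.prodMk_left x))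
    (disjoint_left.2 fun _ ⟨hpx, hxq⟩ ⟨hqp, hpq⟩ =>
      hpq ⟨hCc.out hx hx ⟨hxq.trans hqp, hpx⟩, hCc.out hx hx ⟨hxq, hqp.trans hpx⟩⟩)
  refine ⟨U, V, hU, hUl, hV, hVu, hxU le_rfl, hxV le_rfl, fun z ⟨hzU, hzV⟩ => ?_⟩
  by_contra hz
  exact disjoint_left.1 hUV (mk_mem_prod hzU hzV) ⟨le_rfl, fun h => hz h.1⟩

theorem IsKOmegaSpace.exists_open_lower_upper_disjoint (hX : IsKOmegaSpace X) {A B : Set X}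
    (hA : IsClosed A) (hAl : IsLowerSet A) (hB : IsClosed B) (hBu : IsUpperSet B)
    (hAB : Disjoint A B) :
    ∃ U V, IsOpen U ∧ IsLowerSet U ∧ IsOpen V ∧ IsUpperSet V ∧ A ⊆ U ∧ B ⊆ V ∧ Disjoint U V := by
  set F : Set (X × X) := {p | p.2 ≤ p.1}
  have hFu : IsUpperSet (α := X × Xᵒᵈ) F :=
    isUpperSet_prod_orderDual_iff.2 fun _ _ _ _ hqp hpp' hq'q => hq'q.trans (hqp.trans hpp')
  have hFA : SetRel.image F A = A :=
    ext fun q => ⟨fun ⟨_, hp, hqp⟩ => hAl hqp hp, fun hq => ⟨q, hq, le_rfl⟩⟩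
  have hFB : SetRel.preimage F B = B :=
    ext fun p => ⟨fun ⟨_, hq, hqp⟩ => hBu hqp hq, fun hp => ⟨p, hp, le_rfl⟩⟩
  obtain ⟨U, V, hU, hUl, hV, hVu, hAU, hBV, hUV⟩ := hX.exists_open_lower_upper_disjoint_prod
    (isClosed_le continuous_snd continuous_fst) hFu hA hAl hB hBu (by rwa [hFA]) (by rwa [hFB])
    (disjoint_left.2 fun _ ⟨hp, hq⟩ hqp => disjoint_left.1 hAB hp (hBu hqp hq))
  exact ⟨U, V, hU, hUl, hV, hVu, hAU, hBV,
    disjoint_left.2 fun z hzU hzV => disjoint_left.1 hUV (mk_mem_prod hzU hzV) le_rfl⟩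

end Corollaries

lemma decHull_eq_self_iff {E : Type*} [Preorder E] {S : Set E} :
    decHull S = S ↔ IsLowerSet S :=
  ⟨fun h => h ▸ (lowerClosure S).lower, IsLowerSet.lowerClosure⟩

lemma incHull_eq_self_iff {E : Type*} [Preorder E] {S : Set E} :
    incHull S = S ↔ IsUpperSet S :=
  ⟨fun h => h ▸ (upperClosure S).upper, IsUpperSet.upperClosure⟩

lemma isOrdConvex_iff_ordConnected {E : Type*} [Preorder E] {C : Set E} :
    IsOrdConvex C ↔ C.OrdConnected := by
  rw [ordConnected_iff_upperClosure_inter_lowerClosure, inter_comm]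
  rfl

/-- Every weakly convex closed preordered `k_ω`-space is a convex normally
preordered space. -/
theorem convex_normallyPreordered_of_weaklyConvex {E : Type*} [TopologicalSpace E]
    [Preorder E]
    (hG : IsClosed {p : E × E | p.1 ≤ p.2})
    (hkw : IsKOmegaSpace E)
    (hwc : ∀ x : E, ∀ O ∈ 𝓝 x, ∃ C ∈ 𝓝 x, IsOpen C ∧ IsOrdConvex C ∧ C ⊆ O) :
    (∀ x : E, ∀ O : Set E, IsOpen O → x ∈ O →
      ∃ U V : Set E, IsOpen U ∧ decHull U = U ∧ IsOpen V ∧ incHull V = V ∧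
        x ∈ U ∩ V ∧ U ∩ V ⊆ O) ∧
    (∀ x : E, IsClosed (incHull {x}) ∧ IsClosed (decHull {x})) ∧
    (∀ A B : Set E, IsClosed A → decHull A = A → IsClosed B → incHull B = B →
      A ∩ B = ∅ →
      ∃ U V : Set E, IsOpen U ∧ decHull U = U ∧ IsOpen V ∧ incHull V = V ∧
        A ⊆ U ∧ B ⊆ V ∧ U ∩ V = ∅) := by
  have : OrderClosedTopology E := ⟨hG⟩
  refine ⟨fun x O hO hxO => ?_, fun x => ⟨isCompact_singleton.isClosed_upperClosure,
    isCompact_singleton.isClosed_lowerClosure⟩, fun A B hA hAl hB hBu hAB => ?_⟩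
  · obtain ⟨C, hCx, hC, hCc, hCO⟩ := hwc x O (hO.mem_nhds hxO)
    obtain ⟨U, V, hU, hUl, hV, hVu, hxU, hxV, hUV⟩ :=
      hkw.exists_open_lower_upper_inter_subset hC (isOrdConvex_iff_ordConnected.1 hCc)
        (mem_of_mem_nhds hCx)
    exact ⟨U, V, hU, decHull_eq_self_iff.2 hUl, hV, incHull_eq_self_iff.2 hVu, ⟨hxU, hxV⟩,
      hUV.trans hCO⟩
  · obtain ⟨U, V, hU, hUl, hV, hVu, hAU, hBV, hUV⟩ := hkw.exists_open_lower_upper_disjoint hA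
      (decHull_eq_self_iff.1 hAl) hB (incHull_eq_self_iff.1 hBu) (disjoint_iff_inter_eq_empty.2 hAB)
    exact ⟨U, V, hU, decHull_eq_self_iff.2 hUl, hV, incHull_eq_self_iff.2 hVu, hAU, hBV,
      disjoint_iff_inter_eq_empty.1 hUV⟩
end

section
/- Every locally convex I-space is convex: if E is a topological preordered space such that for every open set S both d(S) and i(S) are open, and the convex neighborhoods of each point form a base of the neighborhood filter at that point, then for every x ∈ E and every open neighborhood O of x there exist an open decreasing set U and an open increasing set V with x ∈ U ∩ V ⊆ O. -/
/-! The hulls of the interior `W` of a convex neighbourhood `C ⊆ O` of `x` do the job: they are open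
because the space is an I-space, they are a lower and an upper set, both contain `x`, and their
intersection lies in `d(C) ∩ i(C) = C ⊆ O`. -/

open Topology

section Hulls

variable {E : Type*} [Preorder E]

theorem subset_decHull (S : Set E) : S ⊆ decHull S :=
  fun y hy => ⟨y, hy, le_rfl⟩

theorem subset_incHull (S : Set E) : S ⊆ incHull S :=
  fun y hy => ⟨y, hy, le_rfl⟩

theorem decHull_mono {S T : Set E} (h : S ⊆ T) : decHull S ⊆ decHull T :=
  fun _ ⟨z, hz, hyz⟩ => ⟨z, h hz, hyz⟩

theorem incHull_mono {S T : Set E} (h : S ⊆ T) : incHull S ⊆ incHull T :=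
  fun _ ⟨z, hz, hzy⟩ => ⟨z, h hz, hzy⟩

@[simp]
theorem decHull_decHull (S : Set E) : decHull (decHull S) = decHull S := by
  refine (subset_decHull _).antisymm' ?_
  rintro y ⟨z, ⟨w, hw, hzw⟩, hyz⟩
  exact ⟨w, hw, hyz.trans hzw⟩

@[simp]
theorem incHull_incHull (S : Set E) : incHull (incHull S) = incHull S := by
  refine (subset_incHull _).antisymm' ?_
  rintro y ⟨z, ⟨w, hw, hwz⟩, hzy⟩
  exact ⟨w, hw, hwz.trans hzy⟩

theorem IsOrdConvex.decHull_inter_incHull_subset {C S : Set E} (hC : IsOrdConvex C)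
    (hS : S ⊆ C) : decHull S ∩ incHull S ⊆ C :=
  hC ▸ Set.inter_subset_inter (decHull_mono hS) (incHull_mono hS)

end Hulls

/-- Every locally convex `I`-space is convex. -/
theorem convex_of_locallyConvex_ISpace {E : Type*} [TopologicalSpace E] [Preorder E]
    (hI : ∀ S : Set E, IsOpen S → IsOpen (decHull S) ∧ IsOpen (incHull S))
    (hlc : ∀ x : E, ∀ O ∈ 𝓝 x, ∃ C ∈ 𝓝 x, IsOrdConvex C ∧ C ⊆ O)
    (x : E) (O : Set E) (hO : IsOpen O) (hxO : x ∈ O) :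
    ∃ U V : Set E, IsOpen U ∧ decHull U = U ∧ IsOpen V ∧ incHull V = V ∧
      x ∈ U ∩ V ∧ U ∩ V ⊆ O := by
  obtain ⟨C, hCx, hCconv, hCO⟩ := hlc x O (hO.mem_nhds hxO)
  have hxW : x ∈ interior C := mem_interior_iff_mem_nhds.2 hCx
  obtain ⟨hUopen, hVopen⟩ := hI (interior C) isOpen_interior
  refine ⟨decHull (interior C), incHull (interior C), hUopen, decHull_decHull _, hVopen,
    incHull_incHull _, ⟨subset_decHull _ hxW, subset_incHull _ hxW⟩, ?_⟩
  exact (hCconv.decHull_inter_incHull_subset interior_subset).trans hCO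
end

section
/- Every compactly generated closed ordered space (i.e., compactly generated closed preordered with ≤ antisymmetric) whose topology is locally compact is weakly convex: at every point the open convex neighborhoods form a base of the neighborhood filter. -/
/-!
Fix `x`, a compact neighbourhood `K` of `x`, and put `W = interior K`, `F = K ∪ closure (R K)`.
Since `≤` is the smallest closed preorder containing `R`, an order chain `p ≤ q` with `p ∈ W` and
`q ∉ F` must pass through the compact shell `F \ W`. As `x` is not linked to itself through the
shell, some compact neighbourhood `P` of `x` has no two points linked through it, so the order hull
`i(P) ∩ d(P)` lies in `F`: `x` has a compact convex neighbourhood `Y`. In the compact pospace `Y`,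
Nachbin's separation of incomparable points by open monotone sets lets finitely many open upper and
lower sets cut `x` off from `Y \ U` for any open `U ∋ x`.
-/

open Topology

/-- The image `R(K) = {y | ∃ x ∈ K, (x,y) ∈ R}` of a set under a relation. -/
def relImage {E : Type*} (R : Set (E × E)) (K : Set E) : Set E :=
  {y | ∃ x ∈ K, (x, y) ∈ R}

open Set

theorem IsCompact.isClosed_setOf_exists_mem {X Y : Type*} [TopologicalSpace X]
    [TopologicalSpace Y] {K : Set Y} (hK : IsCompact K) {Z : Set (X × Y)} (hZ : IsClosed Z) :
    IsClosed {x | ∃ y ∈ K, (x, y) ∈ Z} := by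
  have : CompactSpace K := isCompact_iff_compactSpace.mp hK
  have hproj : {x | ∃ y ∈ K, (x, y) ∈ Z} = Prod.fst '' (Prod.map id ((↑) : K → Y) ⁻¹' Z) := by
    ext x
    simp
  rw [hproj]
  exact isClosedMap_fst_of_compactSpace _
    (hZ.preimage (continuous_id.prodMap continuous_subtype_val))

theorem Set.OrdConnected.isOrdConvex {E : Type*} [Preorder E] {C : Set E} (hC : C.OrdConnected) :
    IsOrdConvex C :=
  Subset.antisymm (fun _ ⟨⟨_, hc, hzc⟩, ⟨_, ha, haz⟩⟩ => hC.out ha hc ⟨haz, hzc⟩)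
    fun z hz => ⟨⟨z, hz, le_rfl⟩, ⟨z, hz, le_rfl⟩⟩

section ClosedPreorder

variable {E : Type*} [TopologicalSpace E] [Preorder E] [OrderClosedTopology E]

theorem IsCompact.isClosed_upperClosure_s16 {K : Set E} (hK : IsCompact K) :
    IsClosed (upperClosure K : Set E) :=
  hK.isClosed_setOf_exists_mem (isClosed_le continuous_snd continuous_fst)

theorem IsCompact.isClosed_lowerClosure_s16 {K : Set E} (hK : IsCompact K) :
    IsClosed (lowerClosure K : Set E) :=
  hK.isClosed_setOf_exists_mem (isClosed_le continuous_fst continuous_snd)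

theorem IsCompact.isClosed_setOf_exists_le_le {S : Set E} (hS : IsCompact S) :
    IsClosed {p : E × E | ∃ w ∈ S, p.1 ≤ w ∧ w ≤ p.2} :=
  hS.isClosed_setOf_exists_mem <|
    (isClosed_le (continuous_fst.comp continuous_fst) continuous_snd).inter
      (isClosed_le continuous_snd (continuous_snd.comp continuous_fst))

theorem IsCompact.exists_isUpperSet_isLowerSet_of_not_le {Y : Set E} (hY : IsCompact Y)
    {p q : E} (hpq : ¬p ≤ q) :
    ∃ A B : Set E, IsOpen A ∧ IsOpen B ∧ IsUpperSet A ∧ IsLowerSet B ∧ p ∈ A ∧ q ∈ B ∧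
      Disjoint (A ∩ Y) B := by
  have hsep : (Ici p ∩ Y) ×ˢ (Iic q ∩ Y) ⊆ {z : E × E | z.1 ≤ z.2}ᶜ :=
    fun z ⟨⟨hpz, _⟩, ⟨hzq, _⟩⟩ hz => hpq (hpz.trans (hz.trans hzq))
  obtain ⟨u, v, hu, hv, hpu, hqv, huv⟩ := generalized_tube_lemma (hY.inter_left isClosed_Ici)
    (hY.inter_left isClosed_Iic) (isClosed_le continuous_fst continuous_snd).isOpen_compl hsep
  refine ⟨(lowerClosure (Y \ u) : Set E)ᶜ, (upperClosure (Y \ v) : Set E)ᶜ,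
    (hY.diff hu).isClosed_lowerClosure_s16.isOpen_compl,
    (hY.diff hv).isClosed_upperClosure_s16.isOpen_compl,
    (lowerClosure _).lower.compl, (upperClosure _).upper.compl, ?_, ?_, ?_⟩
  · rintro ⟨w, ⟨hwY, hwu⟩, hpw⟩
    exact hwu (hpu ⟨hpw, hwY⟩)
  · rintro ⟨w, ⟨hwY, hwv⟩, hwq⟩
    exact hwv (hqv ⟨hwq, hwY⟩)
  · refine disjoint_left.2 fun z ⟨hzA, hzY⟩ hzB => huv (mk_mem_prod ?_ ?_) (le_refl z)
    · by_contra hzu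
      exact hzA (subset_lowerClosure ⟨hzY, hzu⟩)
    · by_contra hzv
      exact hzB (subset_upperClosure ⟨hzY, hzv⟩)

end ClosedPreorder

section ClosedPartialOrder

variable {E : Type*} [TopologicalSpace E] [PartialOrder E] [OrderClosedTopology E]

theorem IsCompact.exists_isOpen_ordConnected_inter_subset {Y U : Set E} (hY : IsCompact Y)
    (hU : IsOpen U) {x : E} (hx : x ∈ U) :
    ∃ C : Set E, IsOpen C ∧ C.OrdConnected ∧ x ∈ C ∧ C ∩ Y ⊆ U := by
  suffices ∃ C : Set E, IsOpen C ∧ C.OrdConnected ∧ x ∈ C ∧ Disjoint C (Y \ U) by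
    obtain ⟨C, hCo, hCconn, hxC, hCY⟩ := this
    exact ⟨C, hCo, hCconn, hxC, fun z ⟨hzC, hzY⟩ => by_contra fun hzU =>
      disjoint_left.1 hCY hzC ⟨hzY, hzU⟩⟩
  refine (hY.diff hU).induction_on ?empty ?mono ?union ?nhds
  case empty => exact ⟨univ, isOpen_univ, ordConnected_univ, mem_univ x, disjoint_empty _⟩
  case mono =>
    exact fun s t hst ⟨C, hCo, hCconn, hxC, hCt⟩ => ⟨C, hCo, hCconn, hxC, hCt.mono_right hst⟩
  case union =>
    exact fun s t ⟨C, hCo, hCconn, hxC, hCs⟩ ⟨D, hDo, hDconn, hxD, hDt⟩ =>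
      ⟨C ∩ D, hCo.inter hDo, hCconn.inter hDconn, ⟨hxC, hxD⟩,
        disjoint_union_right.2 ⟨hCs.mono_left inter_subset_left, hDt.mono_left inter_subset_right⟩⟩
  case nhds =>
    intro y hy
    have hyx : y ≠ x := fun h => hy.2 (h ▸ hx)
    by_cases hxy : x ≤ y
    · obtain ⟨A, B, hAo, hBo, -, hB, hyA, hxB, hAB⟩ :=
        hY.exists_isUpperSet_isLowerSet_of_not_le fun hyx' => hyx (le_antisymm hyx' hxy)
      exact ⟨(Y \ U) ∩ A, inter_mem_nhdsWithin _ (hAo.mem_nhds hyA), B, hBo, hB.ordConnected,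
        hxB, disjoint_left.2 fun z hzB hz => disjoint_left.1 hAB ⟨hz.2, hz.1.1⟩ hzB⟩
    · obtain ⟨A, B, hAo, hBo, hA, -, hxA, hyB, hAB⟩ :=
        hY.exists_isUpperSet_isLowerSet_of_not_le hxy
      exact ⟨(Y \ U) ∩ B, inter_mem_nhdsWithin _ (hBo.mem_nhds hyB), A, hAo, hA.ordConnected,
        hxA, disjoint_left.2 fun z hzA hz => disjoint_left.1 hAB ⟨hzA, hz.1.1⟩ hz.2⟩

theorem IsCompact.exists_mem_nhds_forall_not_le_le {S : Set E} (hS : IsCompact S) {x : E}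
    (hx : x ∉ S) : ∃ V ∈ 𝓝 x, ∀ a ∈ V, ∀ c ∈ V, ∀ w ∈ S, a ≤ w → ¬w ≤ c := by
  have hxx : (x, x) ∉ {p : E × E | ∃ w ∈ S, p.1 ≤ w ∧ w ≤ p.2} :=
    fun ⟨w, hw, hxw, hwx⟩ => hx ((le_antisymm hwx hxw : w = x) ▸ hw)
  obtain ⟨u, hu, v, hv, huv⟩ :=
    mem_nhds_prod_iff.1 (hS.isClosed_setOf_exists_le_le.isOpen_compl.mem_nhds hxx)
  exact ⟨u ∩ v, Filter.inter_mem hu hv, fun a ha c hc w hw haw hwc =>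
    huv (mk_mem_prod ha.1 hc.2) ⟨w, hw, haw, hwc⟩⟩

end ClosedPartialOrder

def IsClosedPreorderGenerator {E : Type*} [TopologicalSpace E] [Preorder E]
    (R : Set (E × E)) : Prop :=
  R ⊆ {p : E × E | p.1 ≤ p.2} ∧
    ∀ T : Set (E × E), IsClosed T → (∀ a : E, (a, a) ∈ T) →
      (∀ a b c : E, (a, b) ∈ T → (b, c) ∈ T → (a, c) ∈ T) → R ⊆ T → {p : E × E | p.1 ≤ p.2} ⊆ T

namespace IsClosedPreorderGenerator

variable {E : Type*} [TopologicalSpace E] {R : Set (E × E)}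

theorem exists_mem_diff_le_le [Preorder E] [OrderClosedTopology E]
    (hR : IsClosedPreorderGenerator R) {W F : Set E} (hW : IsOpen W) (hF : IsClosed F)
    (hFW : IsCompact (F \ W)) (hWF : W ⊆ F) (hRW : relImage R W ⊆ F) {p q : E} (hpq : p ≤ q)
    (hp : p ∈ W) (hq : q ∉ F) : ∃ w ∈ F \ W, p ≤ w ∧ w ≤ q := by
  -- The pairs that start outside `W`, end in `F`, or pass through `F \ W` form a closed preorder
  -- containing `R`, hence contain `≤`.
  set T : Set (E × E) := {z | z.1 ≤ z.2} ∩ ((Prod.fst ⁻¹' Wᶜ ∪ Prod.snd ⁻¹' F) ∪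
    {z | ∃ w ∈ F \ W, z.1 ≤ w ∧ w ≤ z.2})
  have hTclosed : IsClosed T := (isClosed_le continuous_fst continuous_snd).inter
    (((hW.isClosed_compl.preimage continuous_fst).union (hF.preimage continuous_snd)).union
      hFW.isClosed_setOf_exists_le_le)
  have hTrefl : ∀ a : E, (a, a) ∈ T := fun a => ⟨le_rfl, Or.inl <| by
    by_cases ha : a ∈ W
    exacts [Or.inr (hWF ha), Or.inl ha]⟩
  have hTtrans : ∀ a b c : E, (a, b) ∈ T → (b, c) ∈ T → (a, c) ∈ T := by
    rintro a b c ⟨hab, hab'⟩ ⟨hbc, hbc'⟩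
    refine ⟨hab.trans hbc, ?_⟩
    rcases hab' with (ha | hb) | ⟨w, hw, haw, hwb⟩
    · exact Or.inl (Or.inl ha)
    · by_cases hbW : b ∈ W
      · rcases hbc' with (hb' | hc) | ⟨w, hw, hbw, hwc⟩
        exacts [absurd hbW hb', Or.inl (Or.inr hc), Or.inr ⟨w, hw, hab.trans hbw, hwc⟩]
      · exact Or.inr ⟨b, ⟨hb, hbW⟩, hab, hbc⟩
    · exact Or.inr ⟨w, hw, haw, hwb.trans hbc⟩
  have hRT : R ⊆ T := fun ⟨a, b⟩ hab => ⟨hR.1 hab, Or.inl <| by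
    by_cases ha : a ∈ W
    exacts [Or.inr (hRW ⟨a, ha, hab⟩), Or.inl ha]⟩
  obtain ⟨-, (hp' | hq') | hlink⟩ := hR.2 T hTclosed hTrefl hTtrans hRT (show (p, q) ∈ _ from hpq)
  exacts [absurd hp hp', absurd hq' hq, hlink]

theorem exists_isCompact_ordConnected_mem_nhds [PartialOrder E] [OrderClosedTopology E]
    [LocallyCompactSpace E] (hR : IsClosedPreorderGenerator R)
    (hRK : ∀ K : Set E, IsCompact K → IsCompact (closure (relImage R K))) (x : E) :
    ∃ Y : Set E, IsCompact Y ∧ Y.OrdConnected ∧ Y ∈ 𝓝 x := by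
  obtain ⟨K, hK, hKx⟩ := exists_compact_mem_nhds x
  set W := interior K
  set F := K ∪ closure (relImage R K)
  have hF : IsCompact F := hK.union (hRK K hK)
  have hxW : x ∈ W := mem_interior_iff_mem_nhds.2 hKx
  have hWF : W ⊆ F := interior_subset.trans subset_union_left
  have hRW : relImage R W ⊆ F := fun y ⟨a, ha, hay⟩ =>
    Or.inr (subset_closure ⟨a, interior_subset ha, hay⟩)
  obtain ⟨V, hV, hVsep⟩ := (hF.diff isOpen_interior).exists_mem_nhds_forall_not_le_le
    fun hx => hx.2 hxW
  obtain ⟨P, hPx, hPVW, hP⟩ :=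
    local_compact_nhds (Filter.inter_mem hV (isOpen_interior.mem_nhds hxW))
  have hPF : (upperClosure P : Set E) ∩ (lowerClosure P : Set E) ⊆ F := by
    rintro y ⟨⟨a, ha, hay⟩, ⟨c, hc, hyc⟩⟩
    by_contra hy
    obtain ⟨w, hw, haw, hwy⟩ := hR.exists_mem_diff_le_le isOpen_interior hF.isClosed
      (hF.diff isOpen_interior) hWF hRW hay (hPVW ha).2 hy
    exact hVsep a (hPVW ha).1 c (hPVW hc).1 w hw haw (hwy.trans hyc)
  exact ⟨_, hF.of_isClosed_subset (hP.isClosed_upperClosure_s16.inter hP.isClosed_lowerClosure_s16) hPF,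
    (upperClosure P).upper.ordConnected.inter (lowerClosure P).lower.ordConnected,
    Filter.mem_of_superset hPx fun p hp => ⟨subset_upperClosure hp, subset_lowerClosure hp⟩⟩

end IsClosedPreorderGenerator

/-- Every compactly generated closed ordered space whose topology is locally
compact is weakly convex: at every point the open convex neighborhoods form a
base of the neighborhood filter. -/
theorem weaklyConvex_of_compactlyGenerated {E : Type*} [TopologicalSpace E] [Preorder E]
    (hG : IsClosed {p : E × E | p.1 ≤ p.2})
    (hanti : ∀ a b : E, a ≤ b → b ≤ a → a = b)
    (hcg : ∃ R : Set (E × E), R ⊆ {p : E × E | p.1 ≤ p.2} ∧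
      (∀ K : Set E, IsCompact K → IsCompact (closure (relImage R K))) ∧
      (∀ T : Set (E × E), IsClosed T → (∀ a : E, (a, a) ∈ T) →
        (∀ a b c : E, (a, b) ∈ T → (b, c) ∈ T → (a, c) ∈ T) → R ⊆ T →
        {p : E × E | p.1 ≤ p.2} ⊆ T))
    (hloc : ∀ x : E, ∃ K : Set E, IsCompact K ∧ K ∈ 𝓝 x) :
    ∀ x : E, ∀ O ∈ 𝓝 x, ∃ C ∈ 𝓝 x, IsOpen C ∧ IsOrdConvex C ∧ C ⊆ O := by
  let _ : PartialOrder E := { ‹Preorder E› with le_antisymm := hanti }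
  have _ : OrderClosedTopology E := ⟨hG⟩
  have _ : WeaklyLocallyCompactSpace E := ⟨hloc⟩
  obtain ⟨R, hRle, hRK, hRmin⟩ := hcg
  intro x O hO
  obtain ⟨Y, hY, hYconn, hYx⟩ :=
    IsClosedPreorderGenerator.exists_isCompact_ordConnected_mem_nhds ⟨hRle, hRmin⟩ hRK x
  obtain ⟨C, hC, hCconn, hxC, hCY⟩ := hY.exists_isOpen_ordConnected_inter_subset
    isOpen_interior (mem_interior_iff_mem_nhds.2 (Filter.inter_mem hO hYx))
  have hCY_eq : C ∩ Y = C ∩ interior (O ∩ Y) := Subset.antisymm (fun z hz => ⟨hz.1, hCY hz⟩)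
    (inter_subset_inter_right _ (interior_subset.trans inter_subset_right))
  have hCYopen : IsOpen (C ∩ Y) := hCY_eq ▸ hC.inter isOpen_interior
  exact ⟨C ∩ Y, hCYopen.mem_nhds ⟨hxC, mem_of_mem_nhds hYx⟩, hCYopen,
    (hCconn.inter hYconn).isOrdConvex, fun z hz => (interior_subset (hCY hz)).1⟩
end
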